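/- Let G be a graph with distinct node weights, z a node, and d ≥ 0. Then IB(N(z)) ⊆ N_d(z) if and only if there is no weight-increasing path entirely contained in G \ {z} from some node in N(z) \ {z} to some node in N_{d+1}(z) \ N_d(z). Consequently, if node weights are i.i.d. from a continuous distribution, the event {IB(N(z)) ⊆ N_d(z)} is independent of the weight W_z. -/

import Mathlib

open MeasureTheory
open scoped ENNReal

variable {V : Type*}

/-- The ball `N_d(z)` : nodes at graph distance at most `d` from `z`. -/
def gball (G : SimpleGraph V) (z : V) (d : ℕ) : Set V :=
  {v | ∃ p : G.Walk z v, p.length ≤ d}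

/-- A weight-increasing path in `G` from `x` to `y` all of whose nodes avoid `z`. -/
def IsIncPathAvoiding (G : SimpleGraph V) (w : V → ℝ) (x y z : V) : Prop :=
  ∃ n : ℕ, ∃ p : Fin (n + 1) → V,
    p 0 = x ∧ p (Fin.last n) = y ∧
    (∀ i : Fin n, G.Adj (p i.castSucc) (p i.succ)) ∧ StrictMono (w ∘ p) ∧
    ∀ i, p i ≠ z

/-- There is a weight-increasing path in `G` from (some node of) `Z` to `v`. -/
def IsIncPathFrom (G : SimpleGraph V) (w : V → ℝ) (Z : Set V) (v : V) : Prop :=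
  ∃ n : ℕ, ∃ p : Fin (n + 1) → V,
    p 0 ∈ Z ∧ p (Fin.last n) = v ∧
    (∀ i : Fin n, G.Adj (p i.castSucc) (p i.succ)) ∧ StrictMono (w ∘ p)

/-- The minimal influence blocking subgraph `IB(Z)`. -/
def IB (G : SimpleGraph V) (w : V → ℝ) (Z : Set V) : Set V :=
  {v | IsIncPathFrom G w Z v}

/-!
A weight-increasing path from `N(z)` to a node outside `N_d(z)` is cut twice: after its last visit
to `z`, which leaves a path avoiding `z` that starts in `N(z) \ {z}`, and at its first exit from
`N_d(z)`, which lands in `N_{d+1}(z) \ N_d(z)`. The resulting criterion only reads the weights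
off `z`, and it is a closed condition on them, so the indicator of the event is a measurable
function of `(W_v)_{v ≠ z}` and hence independent of `W_z`.
-/

open Relation ProbabilityTheory

theorem Relation.reflTransGen_iff_exists_fin_chain {α : Type*} {r : α → α → Prop} {a b : α} :
    ReflTransGen r a b ↔ ∃ n, ∃ p : Fin (n + 1) → α,
      p 0 = a ∧ p (Fin.last n) = b ∧ ∀ i : Fin n, r (p i.castSucc) (p i.succ) := by
  constructor
  · intro h
    induction h using ReflTransGen.head_induction_on with
    | refl => exact ⟨0, fun _ => b, rfl, rfl, Fin.elim0⟩
    | head hac _ ih =>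
      obtain ⟨n, p, rfl, hl, hp⟩ := ih
      refine ⟨n + 1, Fin.cons _ p, rfl, by simpa using hl, Fin.cases hac fun i => ?_⟩
      simpa using hp i
  · rintro ⟨n, p, rfl, rfl, hp⟩
    induction n with
    | zero => rfl
    | succ n ih => exact (ih (Fin.init p) fun i => hp i.castSucc).tail (hp (Fin.last n))

section Graph

variable (G : SimpleGraph V) (w : V → ℝ)

theorem mem_gball_self (z : V) (d : ℕ) : z ∈ gball G z d :=
  ⟨.nil, Nat.zero_le d⟩

theorem gball_mono (z : V) {d e : ℕ} (h : d ≤ e) : gball G z d ⊆ gball G z e :=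
  fun _ ⟨p, hp⟩ => ⟨p, hp.trans h⟩

theorem mem_gball_succ_of_adj {z u v : V} {d : ℕ} (hu : u ∈ gball G z d) (h : G.Adj u v) :
    v ∈ gball G z (d + 1) := by
  obtain ⟨p, hp⟩ := hu
  exact ⟨p.concat h, by rw [SimpleGraph.Walk.length_concat]; omega⟩

def IncStep (a b : V) : Prop := G.Adj a b ∧ w a < w b

theorem isIncPathFrom_iff {Z : Set V} {v : V} :
    IsIncPathFrom G w Z v ↔ ∃ x ∈ Z, ReflTransGen (IncStep G w) x v := by
  simp only [IsIncPathFrom, reflTransGen_iff_exists_fin_chain, IncStep, forall_and,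
    Fin.strictMono_iff_lt_succ, Function.comp_apply]
  constructor
  · rintro ⟨n, p, hp0, hl, hadj, hmono⟩
    exact ⟨p 0, hp0, n, p, rfl, hl, hadj, hmono⟩
  · rintro ⟨x, hx, n, p, rfl, hl, hadj, hmono⟩
    exact ⟨n, p, hx, hl, hadj, hmono⟩

theorem isIncPathAvoiding_iff {x y z : V} :
    IsIncPathAvoiding G w x y z ↔
      x ≠ z ∧ ReflTransGen (fun a b => IncStep G w a b ∧ b ≠ z) x y := by
  simp only [IsIncPathAvoiding, reflTransGen_iff_exists_fin_chain, IncStep, forall_and,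
    Fin.strictMono_iff_lt_succ, Function.comp_apply, Fin.forall_fin_succ (P := fun i => _ ≠ z)]
  constructor
  · rintro ⟨n, p, rfl, hl, hadj, hmono, hz0, hz⟩
    exact ⟨hz0, n, p, rfl, hl, ⟨hadj, hmono⟩, hz⟩
  · rintro ⟨hxz, n, p, rfl, hl, ⟨hadj, hmono⟩, hz⟩
    exact ⟨n, p, rfl, hl, hadj, hmono, hxz, hz⟩

theorem IsIncPathAvoiding.isIncPathFrom {x y z : V} {Z : Set V}
    (h : IsIncPathAvoiding G w x y z) (hx : x ∈ Z) : IsIncPathFrom G w Z y :=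
  let ⟨n, p, h0, hl, hadj, hmono, _⟩ := h
  ⟨n, p, h0 ▸ hx, hl, hadj, hmono⟩

theorem isIncPathAvoiding_congr {w' : V → ℝ} {x y z : V} (h : Set.EqOn w w' {z}ᶜ) :
    IsIncPathAvoiding G w x y z ↔ IsIncPathAvoiding G w' x y z := by
  suffices ∀ w w' : V → ℝ, Set.EqOn w w' {z}ᶜ →
      IsIncPathAvoiding G w x y z → IsIncPathAvoiding G w' x y z from
    ⟨this w w' h, this w' w h.symm⟩
  rintro w w' h ⟨n, p, h0, hl, hadj, hmono, hz⟩
  have hwp : w ∘ p = w' ∘ p := funext fun i => h (hz i)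
  exact ⟨n, p, h0, hl, hadj, hwp ▸ hmono, hz⟩

theorem exists_isIncPathAvoiding_of_isIncPathFrom {z v : V}
    (hv : IsIncPathFrom G w (gball G z 1) v) (hvz : v ≠ z) :
    ∃ x ∈ gball G z 1 \ {z}, IsIncPathAvoiding G w x v z := by
  obtain ⟨x, hx, hxv⟩ := (isIncPathFrom_iff G w).1 hv
  clear hv
  simp only [isIncPathAvoiding_iff]
  induction hxv with
  | refl => exact ⟨x, ⟨hx, hvz⟩, hvz, .refl⟩
  | @tail b c _ hbc ih =>
    by_cases hb : b = z
    · subst hb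
      exact ⟨c, ⟨mem_gball_succ_of_adj G (mem_gball_self G b 0) hbc.1, hvz⟩, hvz, .refl⟩
    · obtain ⟨x', hx', hx'z, hx'b⟩ := ih hb
      exact ⟨x', hx', hx'z, hx'b.tail ⟨hbc, hvz⟩⟩

theorem exists_isIncPathAvoiding_to_gball_succ_diff {x v z : V} {d : ℕ}
    (hx : x ∈ gball G z (d + 1)) (hxv : IsIncPathAvoiding G w x v z) (hv : v ∉ gball G z d) :
    ∃ y ∈ gball G z (d + 1) \ gball G z d, IsIncPathAvoiding G w x y z := by
  rw [isIncPathAvoiding_iff] at hxv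
  obtain ⟨hxz, hxv⟩ := hxv
  simp only [isIncPathAvoiding_iff]
  induction hxv with
  | refl => exact ⟨x, ⟨hx, hv⟩, hxz, .refl⟩
  | @tail b c hxb hbc ih =>
    by_cases hb : b ∈ gball G z d
    · exact ⟨c, ⟨mem_gball_succ_of_adj G hb hbc.1.1, hv⟩, hxz, hxb.tail hbc⟩
    · exact ih hb

theorem IB_gball_one_subset_gball_iff (z : V) (d : ℕ) :
    IB G w (gball G z 1) ⊆ gball G z d ↔
      ¬ ∃ x ∈ gball G z 1 \ {z}, ∃ y ∈ gball G z (d + 1) \ gball G z d,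
          IsIncPathAvoiding G w x y z := by
  constructor
  · rintro hsub ⟨x, hx, y, hy, hxy⟩
    exact hy.2 (hsub (hxy.isIncPathFrom G w hx.1))
  · intro hno v hv
    by_contra hvd
    have hvz : v ≠ z := fun h => hvd (h ▸ mem_gball_self G z d)
    obtain ⟨x, hx, hxv⟩ := exists_isIncPathAvoiding_of_isIncPathFrom G w hv hvz
    exact hno ⟨x, hx, exists_isIncPathAvoiding_to_gball_succ_diff G w
      (gball_mono G z (by omega) hx.1) hxv hvd⟩

end Graph

theorem isOpen_setOf_strictMono_comp {α : Type*} [LinearOrder α] [TopologicalSpace α]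
    [OrderClosedTopology α] {n : ℕ} (p : Fin (n + 1) → V) :
    IsOpen {w : V → α | StrictMono (w ∘ p)} := by
  simp only [Fin.strictMono_iff_lt_succ, Function.comp_apply, Set.ofPred_forall]
  exact isOpen_iInter_of_finite fun i => isOpen_lt (continuous_apply _) (continuous_apply _)

theorem isOpen_setOf_isIncPathAvoiding (G : SimpleGraph V) (x y z : V) :
    IsOpen {w : V → ℝ | IsIncPathAvoiding G w x y z} := by
  simp only [IsIncPathAvoiding, Set.ofPred_exists, Set.ofPred_and]
  exact isOpen_iUnion fun n => isOpen_iUnion fun p => isOpen_const.inter <| isOpen_const.inter <|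
    isOpen_const.inter <| (isOpen_setOf_strictMono_comp p).inter isOpen_const

theorem isClosed_setOf_IB_gball_one_subset_gball (G : SimpleGraph V) (z : V) (d : ℕ) :
    IsClosed {w : V → ℝ | IB G w (gball G z 1) ⊆ gball G z d} := by
  simp only [IB_gball_one_subset_gball_iff, ← Set.compl_ofPred, isClosed_compl_iff,
    Set.ofPred_exists, Set.ofPred_and]
  exact isOpen_iUnion fun x => isOpen_const.inter <| isOpen_iUnion fun y =>
    isOpen_const.inter <| isOpen_setOf_isIncPathAvoiding G x y z

theorem ProbabilityTheory.indepFun_eval_of_eqOn_compl {ι Ω β : Type*} [Fintype ι]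
    [MeasurableSpace Ω] [MeasurableSpace β] (μ : ι → Measure Ω)
    [∀ i, IsProbabilityMeasure (μ i)] (z : ι) {f : (ι → Ω) → β} (hf : Measurable f)
    (hfz : ∀ w w', Set.EqOn w w' {z}ᶜ → f w = f w') :
    IndepFun (fun w => w z) f (Measure.pi μ) := by
  classical
  obtain ⟨a⟩ := nonempty_of_isProbabilityMeasure (μ z)
  set S : Finset ι := {z}ᶜ
  let g : (S → Ω) → β := fun u => f fun i => if h : i ∈ S then u ⟨i, h⟩ else a
  have hg : Measurable g := hf.comp <| measurable_pi_lambda _ fun i => by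
    split_ifs
    exacts [measurable_pi_apply _, measurable_const]
  have hgf : (g ∘ fun w (i : S) => w i) = f :=
    funext fun w => hfz _ _ fun i hi => dif_pos (Finset.mem_compl.2 (by simpa using hi))
  have hsplit : IndepFun (fun w (i : ({z} : Finset ι)) => w i) (fun w (i : S) => w i)
      (Measure.pi μ) :=
    (iIndepFun_pi (μ := μ) (X := fun _ => id) fun _ => aemeasurable_id).indepFun_finset _ _
      disjoint_compl_right fun _ => measurable_pi_apply _
  have hind := hsplit.comp (measurable_pi_apply ⟨z, Finset.mem_singleton_self z⟩) hg
  rwa [hgf] at hind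

theorem IB_ball_characterization_and_independence_general [Fintype V] (G : SimpleGraph V)
    (z : V) (d : ℕ) (ν : Measure ℝ) [IsProbabilityMeasure ν] :
    (∀ w : V → ℝ, Function.Injective w →
      (IB G w (gball G z 1) ⊆ gball G z d ↔
        ¬ ∃ x ∈ gball G z 1 \ {z}, ∃ y ∈ gball G z (d + 1) \ gball G z d,
            IsIncPathAvoiding G w x y z)) ∧
    ProbabilityTheory.IndepFun (fun w : V → ℝ => w z)
      (Set.indicator {w : V → ℝ | IB G w (gball G z 1) ⊆ gball G z d} fun _ => (1 : ℝ))
      (Measure.pi fun _ : V => ν) := by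
  refine ⟨fun w _ => IB_gball_one_subset_gball_iff G w z d, ?_⟩
  refine indepFun_eval_of_eqOn_compl (fun _ => ν) z
    (measurable_const.indicator (isClosed_setOf_IB_gball_one_subset_gball G z d).measurableSet)
    fun w w' h => ?_
  classical
  simp only [Set.indicator_apply, Set.mem_ofPred_eq, IB_gball_one_subset_gball_iff,
    isIncPathAvoiding_congr G w h]

/-- `IB(N(z)) ⊆ N_d(z)` iff there is no weight-increasing path avoiding `z` from a node of
`N(z) \ {z}` to a node of `N_{d+1}(z) \ N_d(z)`; consequently, for i.i.d. continuous node
weights the event `{IB(N(z)) ⊆ N_d(z)}` is independent of the weight `W_z`. -/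
theorem IB_ball_characterization_and_independence [Fintype V] (G : SimpleGraph V)
    (z : V) (d : ℕ) (ν : Measure ℝ) [IsProbabilityMeasure ν] [NullSingletonClass ν] :
    (∀ w : V → ℝ, Function.Injective w →
      (IB G w (gball G z 1) ⊆ gball G z d ↔
        ¬ ∃ x ∈ gball G z 1 \ {z}, ∃ y ∈ gball G z (d + 1) \ gball G z d,
            IsIncPathAvoiding G w x y z)) ∧
    ProbabilityTheory.IndepFun (fun w : V → ℝ => w z)
      (Set.indicator {w : V → ℝ | IB G w (gball G z 1) ⊆ gball G z d} fun _ => (1 : ℝ))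
      (Measure.pi fun _ : V => ν) :=
  IB_ball_characterization_and_independence_general G z d ν
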